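/- Let S(t) be the unique formal power series over ℝ with zero constant term satisfying S = t(1+2S)(1+S), and let ρ = 3 − √8. For every real t with 0 < t < ρ, the power series S converges at t and S(t) = (1 − 3t − √(1 − 6t + t²))/(4t). -/

import Mathlib

/-!
The coefficients of `S` are nonnegative, and truncating the functional equation gives
`Pₙ₊₁(t) ≤ t (1 + 2 Pₙ(t)) (1 + Pₙ(t))` for the partial sums `Pₙ(t) = ∑_{k<n} sₖ tᵏ`. The map
`x ↦ t (1 + 2x) (1 + x)` is monotone on `x ≥ 0` and fixes the smaller root `r(t)` of
`2t x² + (3t - 1) x + t = 0`, which is the claimed closed form, so every partial sum is at most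
`r(t)`. Hence the series converges; by the Cauchy product its sum `F ≤ r(t)` is again a root of that
quadratic, and the only root `≤ r(t)` is `r(t)` itself.
-/

open PowerSeries Finset

theorem Finset.sum_range_sum_antidiagonal_le {R : Type*} [CommSemiring R] [PartialOrder R]
    [IsOrderedRing R] {f g : ℕ → R} (hf : ∀ i, 0 ≤ f i) (hg : ∀ i, 0 ≤ g i) (n : ℕ) :
    ∑ k ∈ range n, ∑ ij ∈ antidiagonal k, f ij.1 * g ij.2
      ≤ (∑ i ∈ range n, f i) * ∑ j ∈ range n, g j := by
  have hdisj : (range n : Set ℕ).PairwiseDisjoint antidiagonal := fun i _ j _ hij =>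
    disjoint_left.mpr fun ij hi hj => hij <| by
      rw [HasAntidiagonal.mem_antidiagonal] at hi hj; omega
  rw [← sum_biUnion hdisj, sum_mul_sum, ← sum_product']
  refine sum_le_sum_of_subset_of_nonneg (fun ij hij => ?_) fun ij _ _ => mul_nonneg (hf _) (hg _)
  obtain ⟨k, hk, hij⟩ := mem_biUnion.mp hij
  rw [mem_range] at hk
  rw [HasAntidiagonal.mem_antidiagonal] at hij
  simp only [mem_product, mem_range]
  omega

namespace PowerSeries

theorem sum_range_succ_coeff_X_mul {R : Type*} [CommSemiring R] (p : R⟦X⟧) (t : R) (n : ℕ) :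
    ∑ k ∈ range (n + 1), coeff k (X * p) * t ^ k = t * ∑ k ∈ range n, coeff k p * t ^ k := by
  simp only [sum_range_succ', coeff_succ_X_mul, coeff_zero_X_mul, mul_sum, pow_succ]
  simp only [zero_mul, add_zero]
  exact sum_congr rfl fun _ _ => by ring

theorem coeff_mul_mul_pow {R : Type*} [CommSemiring R] (p q : R⟦X⟧) (t : R) (n : ℕ) :
    coeff n (p * q) * t ^ n
      = ∑ ij ∈ antidiagonal n, coeff ij.1 p * t ^ ij.1 * (coeff ij.2 q * t ^ ij.2) := by
  rw [coeff_mul, sum_mul]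
  refine sum_congr rfl fun ij hij => ?_
  rw [← HasAntidiagonal.mem_antidiagonal.mp hij, pow_add]
  ring

theorem coeff_two_mul {R : Type*} [Semiring R] (p : R⟦X⟧) (n : ℕ) :
    coeff n (2 * p) = 2 * coeff n p := by
  rw [two_mul, map_add, two_mul]

section OrderedSemiring

variable {R : Type*} [CommSemiring R] [PartialOrder R] [IsOrderedRing R]

theorem coeff_mul_nonneg {p q : R⟦X⟧} {n : ℕ} (hp : ∀ i ≤ n, 0 ≤ coeff i p)
    (hq : ∀ i ≤ n, 0 ≤ coeff i q) : 0 ≤ coeff n (p * q) := by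
  rw [coeff_mul]
  refine sum_nonneg fun ij hij => mul_nonneg (hp _ ?_) (hq _ ?_) <;>
    · rw [HasAntidiagonal.mem_antidiagonal] at hij; omega

theorem coeff_one_add_nonneg {p : R⟦X⟧} {n : ℕ} (hp : 0 ≤ coeff n p) : 0 ≤ coeff n (1 + p) := by
  rw [map_add, coeff_one]
  exact add_nonneg (by split_ifs <;> simp) hp

theorem sum_range_coeff_one_add_le (p : R⟦X⟧) (t : R) (n : ℕ) :
    ∑ k ∈ range n, coeff k (1 + p) * t ^ k ≤ 1 + ∑ k ∈ range n, coeff k p * t ^ k := by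
  simp only [map_add, add_mul, sum_add_distrib]
  gcongr
  cases n with
  | zero => simp
  | succ n => simp [coeff_one]

theorem sum_range_coeff_mul_le {p q : R⟦X⟧} (hp : ∀ i, 0 ≤ coeff i p) (hq : ∀ i, 0 ≤ coeff i q)
    {t : R} (ht : 0 ≤ t) (n : ℕ) :
    ∑ k ∈ range n, coeff k (p * q) * t ^ k
      ≤ (∑ i ∈ range n, coeff i p * t ^ i) * ∑ j ∈ range n, coeff j q * t ^ j := by
  simp only [coeff_mul_mul_pow]
  exact sum_range_sum_antidiagonal_le (fun i => mul_nonneg (hp i) (pow_nonneg ht i))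
    (fun j => mul_nonneg (hq j) (pow_nonneg ht j)) n

variable {S : R⟦X⟧}

theorem coeff_nonneg_of_eq_X_mul (hS : S = X * (1 + 2 * S) * (1 + S)) (n : ℕ) :
    0 ≤ coeff n S := by
  induction n using Nat.strong_induction_on with
  | _ n ih =>
    cases n with
    | zero => rw [hS, mul_assoc, coeff_zero_X_mul]
    | succ n =>
      rw [hS, mul_assoc, coeff_succ_X_mul]
      refine coeff_mul_nonneg (fun i hi => coeff_one_add_nonneg ?_)
        (fun i hi => coeff_one_add_nonneg (ih i (by omega)))
      rw [coeff_two_mul]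
      exact mul_nonneg zero_le_two (ih i (by omega))

theorem sum_range_succ_le_of_eq_X_mul (hS : S = X * (1 + 2 * S) * (1 + S)) {t : R} (ht : 0 ≤ t)
    (n : ℕ) :
    ∑ k ∈ range (n + 1), coeff k S * t ^ k
      ≤ t * (1 + 2 * ∑ k ∈ range n, coeff k S * t ^ k)
        * (1 + ∑ k ∈ range n, coeff k S * t ^ k) := by
  have hS_nonneg := coeff_nonneg_of_eq_X_mul hS
  have h1S_nonneg i : 0 ≤ coeff i (1 + S) := coeff_one_add_nonneg (hS_nonneg i)
  have h2S_nonneg i : 0 ≤ coeff i (2 * S) := by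
    rw [coeff_two_mul]; exact mul_nonneg zero_le_two (hS_nonneg i)
  have h12S_nonneg i : 0 ≤ coeff i (1 + 2 * S) := coeff_one_add_nonneg (h2S_nonneg i)
  conv_lhs => rw [hS, mul_assoc, sum_range_succ_coeff_X_mul]
  rw [mul_assoc]
  gcongr
  calc ∑ k ∈ range n, coeff k ((1 + 2 * S) * (1 + S)) * t ^ k
      ≤ (∑ k ∈ range n, coeff k (1 + 2 * S) * t ^ k) * ∑ k ∈ range n, coeff k (1 + S) * t ^ k :=
        sum_range_coeff_mul_le h12S_nonneg h1S_nonneg ht n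
    _ ≤ (1 + ∑ k ∈ range n, coeff k (2 * S) * t ^ k) * (1 + ∑ k ∈ range n, coeff k S * t ^ k) :=
        mul_le_mul (sum_range_coeff_one_add_le _ t n) (sum_range_coeff_one_add_le S t n)
          (sum_nonneg fun i _ => mul_nonneg (h1S_nonneg i) (pow_nonneg ht i))
          (add_nonneg zero_le_one
            (sum_nonneg fun i _ => mul_nonneg (h2S_nonneg i) (pow_nonneg ht i)))
    _ = _ := by simp only [coeff_two_mul, mul_assoc, ← mul_sum]

end OrderedSemiring

def HasSumAt {R : Type*} [Semiring R] [TopologicalSpace R] (p : R⟦X⟧) (t a : R) : Prop :=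
  HasSum (fun n => coeff n p * t ^ n) a

section Topological

variable {R : Type*} [CommSemiring R] [TopologicalSpace R] {p q : R⟦X⟧} {t a b : R}

theorem hasSumAt_one : HasSumAt (1 : R⟦X⟧) t 1 := by
  unfold HasSumAt
  convert hasSum_single (f := fun n => coeff n (1 : R⟦X⟧) * t ^ n) 0 fun n hn => by
    simp [coeff_one, hn]
  simp

theorem HasSumAt.add [ContinuousAdd R] (hp : HasSumAt p t a) (hq : HasSumAt q t b) :
    HasSumAt (p + q) t (a + b) := by
  simpa only [HasSumAt, map_add, add_mul] using HasSum.add hp hq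

theorem HasSumAt.X_mul [IsTopologicalSemiring R] (hp : HasSumAt p t a) :
    HasSumAt (X * p) t (t * a) := by
  have hshift : HasSum (fun n => coeff (n + 1) (X * p) * t ^ (n + 1)) (t * a) := by
    simp only [coeff_succ_X_mul, pow_succ, ← mul_assoc]
    rw [mul_comm t a]
    exact hp.mul_right t
  have := HasSum.zero_add (f := fun n => coeff n (X * p) * t ^ n) hshift
  rwa [coeff_zero_X_mul, zero_mul, zero_add] at this

end Topological

theorem HasSumAt.mul {𝕜 : Type*} [RCLike 𝕜] {p q : 𝕜⟦X⟧} {t a b : 𝕜} (hp : HasSumAt p t a)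
    (hq : HasSumAt q t b) : HasSumAt (p * q) t (a * b) := by
  have hp' := summable_norm_iff.mpr hp.summable
  have hq' := summable_norm_iff.mpr hq.summable
  unfold HasSumAt
  simp only [coeff_mul_mul_pow]
  rw [← hp.tsum_eq, ← hq.tsum_eq, tsum_mul_tsum_eq_tsum_sum_antidiagonal_of_summable_norm hp' hq']
  exact (summable_norm_sum_mul_antidiagonal_of_summable_norm hp' hq').of_norm.hasSum

theorem HasSumAt.eq_of_eq_X_mul {𝕜 : Type*} [RCLike 𝕜] {S : 𝕜⟦X⟧}
    (hS : S = X * (1 + 2 * S) * (1 + S)) {t F : 𝕜} (hF : HasSumAt S t F) :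
    F = t * (1 + 2 * F) * (1 + F) := by
  have h := ((hasSumAt_one.add (hF.add hF)).mul (hasSumAt_one.add hF)).X_mul
  rw [← two_mul, ← two_mul, ← mul_assoc, ← mul_assoc, ← hS] at h
  exact hF.unique h

end PowerSeries

noncomputable def halfAnimalRoot (t : ℝ) : ℝ := (1 - 3 * t - √(1 - 6 * t + t ^ 2)) / (4 * t)

section HalfAnimalRoot

variable {t : ℝ}

theorem one_sub_six_mul_add_sq_nonneg (htρ : t < 3 - √8) : 0 ≤ 1 - 6 * t + t ^ 2 := by
  nlinarith [Real.sq_sqrt (show (0 : ℝ) ≤ 8 by norm_num), Real.sqrt_nonneg 8]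

theorem sqrt_one_sub_six_mul_add_sq_lt (ht : 0 < t) (htρ : t < 3 - √8) :
    √(1 - 6 * t + t ^ 2) < 1 - 3 * t := by
  have h8 : √8 ^ 2 = 8 := Real.sq_sqrt (by norm_num)
  exact (Real.sqrt_lt' (by nlinarith [Real.sqrt_nonneg 8])).mpr (by nlinarith)

theorem halfAnimalRoot_nonneg (ht : 0 < t) (htρ : t < 3 - √8) : 0 ≤ halfAnimalRoot t :=
  div_nonneg (by linarith [sqrt_one_sub_six_mul_add_sq_lt ht htρ]) (by positivity)

theorem halfAnimalRoot_eq (ht : 0 < t) (htρ : t < 3 - √8) :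
    t * (1 + 2 * halfAnimalRoot t) * (1 + halfAnimalRoot t) = halfAnimalRoot t := by
  have hs := Real.sq_sqrt (one_sub_six_mul_add_sq_nonneg htρ)
  unfold halfAnimalRoot
  generalize √(1 - 6 * t + t ^ 2) = s at hs ⊢
  field_simp
  linear_combination 2 * hs

theorem eq_halfAnimalRoot_of_le (ht : 0 < t) (htρ : t < 3 - √8) {x : ℝ}
    (hx : x = t * (1 + 2 * x) * (1 + x)) (hle : x ≤ halfAnimalRoot t) : x = halfAnimalRoot t := by
  have hr := halfAnimalRoot_eq ht htρ
  have hs := Real.sqrt_nonneg (1 - 6 * t + t ^ 2)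
  have h4 : 4 * t * halfAnimalRoot t = 1 - 3 * t - √(1 - 6 * t + t ^ 2) := by
    unfold halfAnimalRoot; field_simp
  have hfac : (x - halfAnimalRoot t) * (2 * t * (x + halfAnimalRoot t) + 3 * t - 1) = 0 := by
    linear_combination -hx - hr
  rcases mul_eq_zero.mp hfac with h | h
  · linarith
  · nlinarith

end HalfAnimalRoot

open PowerSeries in
theorem halfAnimalGF_sum_formula (S : PowerSeries ℝ)
    (hS : S = X * (1 + 2 * S) * (1 + S)) :
    ∀ t : ℝ, 0 < t → t < 3 - Real.sqrt 8 →
      Summable (fun n : ℕ => coeff n S * t ^ n) ∧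
      ∑' n : ℕ, coeff n S * t ^ n
        = (1 - 3 * t - Real.sqrt (1 - 6 * t + t ^ 2)) / (4 * t) := by
  intro t ht htρ
  have hterm_nonneg (n : ℕ) : 0 ≤ coeff n S * t ^ n :=
    mul_nonneg (coeff_nonneg_of_eq_X_mul hS n) (pow_nonneg ht.le n)
  have hbound (n : ℕ) : ∑ k ∈ range n, coeff k S * t ^ k ≤ halfAnimalRoot t := by
    induction n with
    | zero => simpa using halfAnimalRoot_nonneg ht htρ
    | succ n ih =>
      have := sum_nonneg fun k (_ : k ∈ range n) => hterm_nonneg k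
      have := halfAnimalRoot_nonneg ht htρ
      calc _ ≤ _ := sum_range_succ_le_of_eq_X_mul hS ht.le n
        _ ≤ t * (1 + 2 * halfAnimalRoot t) * (1 + halfAnimalRoot t) := by gcongr
        _ = halfAnimalRoot t := halfAnimalRoot_eq ht htρ
  have hsum := summable_of_sum_range_le hterm_nonneg hbound
  exact ⟨hsum, eq_halfAnimalRoot_of_le ht htρ (HasSumAt.eq_of_eq_X_mul hS hsum.hasSum)
    (hsum.tsum_le_of_sum_range_le hbound)⟩
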